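/- Let S be an inverse semigroup, (τ, T) an inverse congruence pair, and ρ = { (x,y) : x⁻¹y ∈ T, x⁻¹yy⁻¹x τ x⁻¹x, y⁻¹xx⁻¹y τ y⁻¹y }. Then the trace of ρ equals τ (i.e. for idempotents e, f: e ρ f iff e τ f) and the inverse kernel of ρ equals T (i.e. a ρ aa⁻¹ iff a ∈ T). -/

import Mathlib

class InverseSemigroup (S : Type*) extends Semigroup S where
  inv : S → S
  mul_inv_mul : ∀ a : S, a * inv a * a = a
  inv_mul_inv : ∀ a : S, inv a * a * inv a = inv a
  inv_unique : ∀ a b : S, a * b * a = a → b * a * b = b → b = inv a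

open InverseSemigroup

/-- `e` is an idempotent. -/
def IsIdem {S : Type*} [Mul S] (e : S) : Prop := e * e = e

/-- `r` is a left congruence: an equivalence relation compatible with left multiplication. -/
def IsLeftCongruence {S : Type*} [Semigroup S] (r : S → S → Prop) : Prop :=
  Equivalence r ∧ ∀ a b c : S, r a b → r (c * a) (c * b)

/-- The inverse kernel of a relation: elements related to `a * a⁻¹`. -/
def InK {S : Type*} [InverseSemigroup S] (r : S → S → Prop) : Set S :=
  {a | r a (a * inv a)}

/-- The kernel: elements related to some idempotent. -/
def lker {S : Type*} [InverseSemigroup S] (r : S → S → Prop) : Set S :=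
  {a | ∃ e, IsIdem e ∧ r a e}

/-- `τ` is a congruence on the semilattice of idempotents `E(S)`. -/
def IsECong {S : Type*} [InverseSemigroup S] (τ : S → S → Prop) : Prop :=
  (∀ e f, τ e f → IsIdem e ∧ IsIdem f) ∧
  (∀ e, IsIdem e → τ e e) ∧
  (∀ e f, τ e f → τ f e) ∧
  (∀ e f g, τ e f → τ f g → τ e g) ∧
  (∀ e f g, IsIdem g → τ e f → τ (g * e) (g * f))

/-- The normaliser of a congruence on the idempotents. -/
def normaliser {S : Type*} [InverseSemigroup S] (τ : S → S → Prop) : Set S :=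
  {a | ∀ e f, τ e f → τ (a * e * inv a) (a * f * inv a) ∧ τ (inv a * e * a) (inv a * f * a)}

/-- `T` is a full inverse subsemigroup of `S`. -/
def IsFullInverseSub {S : Type*} [InverseSemigroup S] (T : Set S) : Prop :=
  (∀ e : S, IsIdem e → e ∈ T) ∧ (∀ a b, a ∈ T → b ∈ T → a * b ∈ T) ∧
  (∀ a, a ∈ T → inv a ∈ T)

/-!
Both parts reduce to identities in `S`. For idempotents `e, f` the defining conditions of
`e ρ f` read `ef ∈ T`, `ef τ e` and `fe τ f`; since idempotents commute, the last two say
`e τ ef τ f`, and conversely `e τ f` gives them by multiplying with `e` and with `f`. For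
`a` and `aa⁻¹` the two `τ`-conditions are instances of reflexivity, and the remaining one,
`a⁻¹(aa⁻¹) = a⁻¹ ∈ T`, holds iff `a ∈ T` because `T` is closed under inverses.
-/

open InverseSemigroup

namespace InverseSemigroup

variable {S : Type*} [InverseSemigroup S]

theorem inv_inv_eq (a : S) : inv (inv a) = a :=
  (inv_unique (inv a) a (inv_mul_inv a) (mul_inv_mul a)).symm

theorem inv_mul_mul_inv (a : S) : inv a * (a * inv a) = inv a := by
  rw [← mul_assoc, inv_mul_inv]

theorem isIdem_mul_inv (a : S) : IsIdem (a * inv a) := by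
  show a * inv a * (a * inv a) = a * inv a
  rw [← mul_assoc, mul_inv_mul]

theorem isIdem_inv_mul (a : S) : IsIdem (inv a * a) := by
  show inv a * a * (inv a * a) = inv a * a
  rw [← mul_assoc, inv_mul_inv]

end InverseSemigroup

namespace IsIdem

variable {S : Type*} [InverseSemigroup S] {e f : S}

theorem eq (he : IsIdem e) : e * e = e := he

theorem inv_eq (he : IsIdem e) : inv e = e :=
  (inv_unique e e (by rw [he.eq, he.eq]) (by rw [he.eq, he.eq])).symm

/-- With `b = (ef)⁻¹`, the element `f b e` is again an inverse of `ef`, so `b = f b e`; this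
makes `b` idempotent, hence `ef = b⁻¹ = b` is idempotent. -/
theorem mul (he : IsIdem e) (hf : IsIdem f) : IsIdem (e * f) := by
  set b := inv (e * f)
  have hb₁ : e * f * b * (e * f) = e * f := mul_inv_mul (e * f)
  have hb₂ : b * (e * f) * b = b := inv_mul_inv (e * f)
  have hfbe : f * b * e = b := by
    apply InverseSemigroup.inv_unique
    · calc e * f * (f * b * e) * (e * f) = e * (f * f) * b * (e * e) * f := by
            simp only [mul_assoc]
        _ = e * f * b * (e * f) := by rw [he.eq, hf.eq]; simp only [mul_assoc]
        _ = e * f := hb₁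
    · calc f * b * e * (e * f) * (f * b * e) = f * b * ((e * e) * (f * f)) * b * e := by
            simp only [mul_assoc]
        _ = f * (b * (e * f) * b) * e := by rw [he.eq, hf.eq]; simp only [mul_assoc]
        _ = f * b * e := by rw [hb₂]
  have hb : IsIdem b := by
    show b * b = b
    calc b * b = f * (b * (e * f) * b) * e := by
          conv_lhs => rw [← hfbe]
          simp only [mul_assoc]
      _ = b := by rw [hb₂, hfbe]
  have hef : e * f = b := by
    rw [← hb.inv_eq]
    exact InverseSemigroup.inv_unique b (e * f) hb₂ hb₁
  exact hef ▸ hb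

theorem mul_comm (he : IsIdem e) (hf : IsIdem f) : e * f = f * e := by
  have hfe : f * e = inv (e * f) := by
    apply InverseSemigroup.inv_unique
    · calc e * f * (f * e) * (e * f) = e * (f * f) * (e * e) * f := by simp only [mul_assoc]
        _ = e * f * (e * f) := by rw [he.eq, hf.eq]; simp only [mul_assoc]
        _ = e * f := (he.mul hf).eq
    · calc f * e * (e * f) * (f * e) = f * (e * e) * (f * f) * e := by simp only [mul_assoc]
        _ = f * e * (f * e) := by rw [he.eq, hf.eq]; simp only [mul_assoc]
        _ = f * e := (hf.mul he).eq
  rw [hfe, (he.mul hf).inv_eq]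

end IsIdem

section CongruencePair

variable {S : Type*} [InverseSemigroup S]

/-- The relation `ρ` induced by a pair `(τ, T)`. -/
def congruencePairRel (τ : S → S → Prop) (T : Set S) (x y : S) : Prop :=
  inv x * y ∈ T ∧ τ (inv x * y * inv y * x) (inv x * x) ∧ τ (inv y * x * inv x * y) (inv y * y)

theorem congruencePairRel_iff_of_isIdem {τ : S → S → Prop} {T : Set S} (hτ : IsECong τ)
    (hT : IsFullInverseSub T) {e f : S} (he : IsIdem e) (hf : IsIdem f) :
    congruencePairRel τ T e f ↔ τ e f := by
  obtain ⟨-, -, hsymm, htrans, hmul⟩ := hτ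
  have hefe : e * f * f * e = e * f := by
    rw [mul_assoc e, hf.eq, mul_assoc, hf.mul_comm he, ← mul_assoc, he.eq]
  have hfef : f * e * e * f = e * f := by
    rw [mul_assoc f, he.eq, mul_assoc, he.mul_comm hf, ← mul_assoc, hf.eq, hf.mul_comm he]
  have hfe : f * e = e * f := hf.mul_comm he
  simp only [congruencePairRel, he.inv_eq, hf.inv_eq, hefe, hfef, he.eq, hf.eq]
  constructor
  · rintro ⟨-, hef_e, hef_f⟩
    exact htrans _ _ _ (hsymm _ _ hef_e) hef_f
  · intro hef
    refine ⟨hT.1 _ (he.mul hf), ?_, ?_⟩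
    · simpa only [he.eq] using hsymm _ _ (hmul e f e he hef)
    · simpa only [hf.eq, hfe] using hmul e f f hf hef

theorem congruencePairRel_mul_inv_iff {τ : S → S → Prop} {T : Set S} (hτ : IsECong τ)
    (hT : IsFullInverseSub T) (a : S) :
    congruencePairRel τ T a (a * inv a) ↔ a ∈ T := by
  have haa : a * inv a * (a * inv a) = a * inv a := isIdem_mul_inv a
  simp only [congruencePairRel, inv_mul_mul_inv, (isIdem_mul_inv a).inv_eq, mul_inv_mul, haa]
  refine ⟨fun h => inv_inv_eq a ▸ hT.2.2 _ h.1, fun ha => ⟨hT.2.2 _ ha, ?_, ?_⟩⟩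
  · exact hτ.2.1 _ (isIdem_inv_mul a)
  · exact hτ.2.1 _ (isIdem_mul_inv a)

end CongruencePair

theorem stmt6_general {S : Type*} [InverseSemigroup S] (τ : S → S → Prop) (T : Set S)
    (hτ : IsECong τ) (hT : IsFullInverseSub T) :
    (∀ e f : S, IsIdem e → IsIdem f →
      ((inv e * f ∈ T ∧ τ (inv e * f * inv f * e) (inv e * e) ∧
        τ (inv f * e * inv e * f) (inv f * f)) ↔ τ e f)) ∧
    (∀ a : S,
      (inv a * (a * inv a) ∈ T ∧
        τ (inv a * (a * inv a) * inv (a * inv a) * a) (inv a * a) ∧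
        τ (inv (a * inv a) * a * inv a * (a * inv a)) (inv (a * inv a) * (a * inv a))) ↔
      a ∈ T) :=
  ⟨fun _ _ he hf => congruencePairRel_iff_of_isIdem hτ hT he hf,
    congruencePairRel_mul_inv_iff hτ hT⟩

theorem stmt6 {S : Type*} [InverseSemigroup S] (τ : S → S → Prop) (T : Set S)
    (hτ : IsECong τ) (hT : IsFullInverseSub T) (hTN : T ⊆ normaliser τ)
    (hD2 : ∀ x e f : S, IsIdem e → IsIdem f → τ (inv x * x) e → τ (x * inv x) f →
      x * e ∈ T → f * x ∈ T → x ∈ T) :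
    (∀ e f : S, IsIdem e → IsIdem f →
      ((inv e * f ∈ T ∧ τ (inv e * f * inv f * e) (inv e * e) ∧
        τ (inv f * e * inv e * f) (inv f * f)) ↔ τ e f)) ∧
    (∀ a : S,
      (inv a * (a * inv a) ∈ T ∧
        τ (inv a * (a * inv a) * inv (a * inv a) * a) (inv a * a) ∧
        τ (inv (a * inv a) * a * inv a * (a * inv a)) (inv (a * inv a) * (a * inv a))) ↔
      a ∈ T) :=
  stmt6_general τ T hτ hT
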